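/- Let n ≥ 1, let L̄ be a complex polynomial of degree exactly n, let k ∈ ℕ be such that L̄(j+k) ≠ 0 for every integer j ≥ 1, and set σ = inf_{j≥1} |L̄(j+k)|/jⁿ > 0. Let M(z, y₀,…,y_n) be holomorphic in a neighbourhood of the closed polydisk Δ̄ = { |z| ≤ r, |y₀| ≤ ρ, …, |y_n| ≤ ρ } (r, ρ > 0), and set μ = max_{Δ̄} |M|. Let ψ̂ = Σ_{j≥1} c_j z^j be the unique formal power series with zero constant term satisfying L̄(δ+k)ψ̂ = z·M(z, ψ̂, δψ̂, …, δⁿψ̂). Then ψ̂ converges in the disk of radius R = r·ρ/(ρ + μr/(σN)) centred at 0, where N = (n+1)^{n+1}/(n+2)^{n+2}; that is, Σ_{j≥1} |c_j| t^j < ∞ for every 0 < t < R. -/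

import Mathlib

/-!
Majorant method. Put `v_j = jⁿ |c_j|` for the coefficients `c_j` of `ψ̂`, so that every
coefficient of `δⁱψ̂`, `i ≤ n`, is bounded by `v_j`. Comparing coefficients in the equation gives
`σ v_{j+1} ≤ |[z^j] M(z, ψ̂, δψ̂, …, δⁿψ̂)|`, and Cauchy's estimates bound the coefficients of `M`
by `μ r^{-a} ρ^{-|b|}`. Since the truncated weighted sums `S_J = Σ_{j<J} v_j t^j` are
submultiplicative, this yields `σ S_{J+1} ≤ μ t (1 - t/r)⁻¹ (1 - S_J/ρ)^{-(n+1)}` as long as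
`S_J < ρ`. For `t < R` the equation `σ s (1 - s/ρ)^{n+1} = μ t (1 - t/r)⁻¹` has a root `s < ρ`,
because `s (1 - s/ρ)^{n+1}` attains `ρN` at `s = ρ/(n+2)`; by induction `S_J ≤ s` for every `J`.
-/

open PowerSeries

/-- Euler derivative `δu = z·u'`: coefficientwise `(δu)_j = j·u_j`. -/
noncomputable def eulerD (u : PowerSeries ℂ) : PowerSeries ℂ :=
  PowerSeries.mk fun j => (j : ℂ) * PowerSeries.coeff j u

/-- Substitution of one-variable power series (with zero constant terms)
into a multivariate formal power series. -/
noncomputable def substSeries {m : ℕ} (F : MvPowerSeries (Fin m) ℂ)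
    (u : Fin m → PowerSeries ℂ) : PowerSeries ℂ :=
  PowerSeries.mk fun j =>
    ∑' d : Fin m →₀ ℕ, MvPowerSeries.coeff d F *
      PowerSeries.coeff j (∏ i : Fin m, (u i) ^ (d i))

/-- `F` is (the Taylor series at 0 of) a function holomorphic in a neighbourhood
of `0 ∈ ℂ^m`: absolute convergence on some polydisk of positive radius. -/
def ConvNearZero {m : ℕ} (F : MvPowerSeries (Fin m) ℂ) : Prop :=
  ∃ r : ℝ, 0 < r ∧ Summable fun d : Fin m →₀ ℕ =>
    ‖MvPowerSeries.coeff d F‖ * r ^ (d.sum fun _ v => v)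

/-- Positive radius of convergence of a formal power series. -/
def PosRadius (u : PowerSeries ℂ) : Prop :=
  ∃ R : ℝ, 0 < R ∧ Summable fun j : ℕ => ‖PowerSeries.coeff j u‖ * R ^ j

/-- The tuple `(z, φ, δφ, …, δⁿφ)` to be substituted into `F(z,y₀,…,y_n)`. -/
noncomputable def phiArgs (n : ℕ) (φ : PowerSeries ℂ) : Fin (n + 2) → PowerSeries ℂ :=
  fun i => if (i : ℕ) = 0 then PowerSeries.X else eulerD^[(i : ℕ) - 1] φ

/-- Formal partial derivative of a multivariate power series. -/
noncomputable def pderivMv {m : ℕ} (i : Fin m) (F : MvPowerSeries (Fin m) ℂ) :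
    MvPowerSeries (Fin m) ℂ :=
  fun d => ((d i : ℂ) + 1) * MvPowerSeries.coeff (d + Finsupp.single i 1) F

/-- The shifted Euler derivative `(δ + k) u`. -/
noncomputable def dshift (k : ℕ) (u : PowerSeries ℂ) : PowerSeries ℂ :=
  eulerD u + (k : ℂ) • u

/-- `L̄(δ+k)u = Σᵢ bᵢ (δ+k)ⁱ u` for a polynomial `L̄(ξ) = Σᵢ bᵢ ξⁱ`. -/
noncomputable def LpolyOp (L : Polynomial ℂ) (k : ℕ) (u : PowerSeries ℂ) : PowerSeries ℂ :=
  ∑ i ∈ Finset.range (L.natDegree + 1), L.coeff i • (dshift k)^[i] u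

/-- The sum of a multivariate power series at a point. -/
noncomputable def evalMv {m : ℕ} (F : MvPowerSeries (Fin m) ℂ) (x : Fin m → ℂ) : ℂ :=
  ∑' d : Fin m →₀ ℕ, MvPowerSeries.coeff d F * ∏ i : Fin m, x i ^ d i

open Filter Topology

theorem Polynomial.tendsto_eval_div_pow_natDegree {𝕜 : Type*} [NormedField 𝕜]
    (P : Polynomial 𝕜) :
    Tendsto (fun x => P.eval x / x ^ P.natDegree) (Bornology.cobounded 𝕜)
      (𝓝 P.leadingCoeff) := by
  have hrev : (fun x => P.reverse.eval x⁻¹) =ᶠ[Bornology.cobounded 𝕜]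
      fun x => P.eval x / x ^ P.natDegree := by
    filter_upwards [Bornology.eventually_ne_cobounded 0] with x hx
    have := invertibleOfNonzero hx
    rw [eq_div_iff (pow_ne_zero _ hx), ← eval₂_id, ← eval₂_id, ← invOf_eq_inv,
      eval₂_reverse_mul_pow]
  refine Tendsto.congr' hrev ?_
  rw [← coeff_zero_reverse, coeff_zero_eq_eval_zero]
  exact P.reverse.continuous.continuousAt.tendsto.comp tendsto_inv₀_cobounded

theorem exists_pos_forall_le_of_tendsto {u : ℕ → ℝ} {a : ℝ} (hu : ∀ j, 0 < u j)
    (ha : 0 < a) (h : Tendsto u atTop (𝓝 a)) : ∃ c, 0 < c ∧ ∀ j, c ≤ u j := by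
  obtain ⟨B, hB⟩ := (h.inv₀ ha.ne').bddAbove_range
  have hB' : ∀ j, (u j)⁻¹ ≤ B := fun j => hB ⟨j, rfl⟩
  have hBpos : 0 < B := (inv_pos.2 (hu 0)).trans_le (hB' 0)
  exact ⟨B⁻¹, inv_pos.2 hBpos, fun j => by
    simpa using inv_anti₀ (inv_pos.2 (hu j)) (hB' j)⟩

theorem Polynomial.iInf_norm_eval_div_pow_pos {L : Polynomial ℂ} {n : ℕ}
    (hdeg : L.natDegree = n) (hL0 : L ≠ 0) {k : ℕ}
    (hLk : ∀ j : ℕ, 1 ≤ j → L.eval ((j + k : ℕ) : ℂ) ≠ 0) :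
    0 < ⨅ j : ℕ, ‖L.eval ((j + 1 + k : ℕ) : ℂ)‖ / ((j + 1 : ℕ) : ℝ) ^ n := by
  set u : ℕ → ℝ := fun j => ‖L.eval ((j + 1 + k : ℕ) : ℂ)‖ / ((j + 1 + k : ℕ) : ℝ) ^ n
  have hu : ∀ j, 0 < u j := fun j =>
    div_pos (norm_pos_iff.2 (hLk (j + 1) le_add_self)) (by positivity)
  have hlim : Tendsto u atTop (𝓝 ‖L.leadingCoeff‖) := by
    have := ((hdeg ▸ L.tendsto_eval_div_pow_natDegree).comp
      ((tendsto_natCast_atTop_cobounded).comp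
        (tendsto_add_atTop_nat (1 + k)))).norm
    refine this.congr fun j => ?_
    simp only [u, Function.comp_apply, norm_div, norm_pow, Complex.norm_natCast, add_assoc]
  obtain ⟨c, hc, hcu⟩ := exists_pos_forall_le_of_tendsto hu
    (norm_pos_iff.2 (leadingCoeff_ne_zero.2 hL0)) hlim
  refine hc.trans_le (le_ciInf fun j => (hcu j).trans ?_)
  exact div_le_div_of_nonneg_left (norm_nonneg _) (by positivity)
    (pow_le_pow_left₀ (by positivity) (by norm_cast; omega) n)

theorem Polynomial.mul_pow_le_norm_eval_of_eq_iInf {L : Polynomial ℂ} {n k : ℕ} {σ : ℝ}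
    (hσ : σ = ⨅ j : ℕ, ‖L.eval ((j + 1 + k : ℕ) : ℂ)‖ / ((j + 1 : ℕ) : ℝ) ^ n) (j : ℕ)
    (hj : 1 ≤ j) : σ * (j : ℝ) ^ n ≤ ‖L.eval ((j + k : ℕ) : ℂ)‖ := by
  obtain ⟨i, rfl⟩ := Nat.exists_eq_add_of_le' hj
  have hle : σ ≤ ‖L.eval ((i + 1 + k : ℕ) : ℂ)‖ / ((i + 1 : ℕ) : ℝ) ^ n :=
    hσ ▸ ciInf_le ⟨0, by rintro _ ⟨i, rfl⟩; positivity⟩ i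
  rwa [le_div_iff₀ (by positivity)] at hle

theorem IsPrimitiveRoot.sum_range_pow_div_pow_pow {ω : ℂ} {N : ℕ} (hω : IsPrimitiveRoot ω N)
    (hN : N ≠ 0) (a b : ℕ) :
    ∑ c ∈ Finset.range N, (ω ^ a / ω ^ b) ^ c = if a ≡ b [MOD N] then (N : ℂ) else 0 := by
  have hω0 : ω ≠ 0 := hω.ne_zero hN
  split_ifs with hab
  · have : ω ^ a = ω ^ b := by
      rwa [(hω.isOfFinOrder hN).pow_eq_pow_iff_modEq, ← hω.eq_orderOf]
    simp [this, pow_ne_zero _ hω0]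
  · have hne : ω ^ a / ω ^ b ≠ 1 := by
      rwa [ne_eq, div_eq_one_iff_eq (pow_ne_zero _ hω0),
        (hω.isOfFinOrder hN).pow_eq_pow_iff_modEq, ← hω.eq_orderOf]
    rw [geom_sum_eq hne, div_pow, ← pow_mul, ← pow_mul, mul_comm a, mul_comm b, pow_mul,
      pow_mul, hω.pow_eq_one, one_pow, one_pow, div_one, sub_self, zero_div]

theorem IsPrimitiveRoot.sum_piFinset_prod_pow_div_pow_pow {ω : ℂ} {N : ℕ}
    (hω : IsPrimitiveRoot ω N) (hN : N ≠ 0) {q : ℕ} (d e : Fin q → ℕ) :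
    ∑ κ ∈ Fintype.piFinset fun _ : Fin q => Finset.range N,
        ∏ i, (ω ^ d i / ω ^ e i) ^ κ i =
      if ∀ i, d i ≡ e i [MOD N] then (N : ℂ) ^ q else 0 := by
  simp only [← Finset.prod_univ_sum, hω.sum_range_pow_div_pow_pow hN, Finset.prod_ite_zero,
    Finset.mem_univ, true_imp_iff, Finset.prod_const, Finset.card_univ, Fintype.card_fin]

theorem evalMv_mul_eq_tsum {q : ℕ} (F : MvPowerSeries (Fin q) ℂ) (ζ x : Fin q → ℂ) :
    evalMv F (fun i => ζ i * x i) =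
      ∑' d : Fin q →₀ ℕ, (MvPowerSeries.coeff d F * ∏ i, x i ^ d i) * ∏ i, ζ i ^ d i := by
  refine tsum_congr fun d => ?_
  simp only [mul_pow, Finset.prod_mul_distrib]
  ring

theorem IsPrimitiveRoot.average_evalMv_eq_tsum {ω : ℂ} {N : ℕ} (hω : IsPrimitiveRoot ω N)
    (hN : N ≠ 0) {q : ℕ} (F : MvPowerSeries (Fin q) ℂ) (x : Fin q → ℂ)
    (hsum : Summable fun d : Fin q →₀ ℕ => ‖MvPowerSeries.coeff d F * ∏ i, x i ^ d i‖)
    (d₀ : Fin q →₀ ℕ) :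
    ((N : ℂ) ^ q)⁻¹ * ∑ κ ∈ Fintype.piFinset fun _ : Fin q => Finset.range N,
        (∏ i, (ω ^ d₀ i) ^ κ i)⁻¹ * evalMv F (fun i => ω ^ κ i * x i) =
      ∑' d : Fin q →₀ ℕ, if ∀ i, d i ≡ d₀ i [MOD N] then
        MvPowerSeries.coeff d F * ∏ i, x i ^ d i else 0 := by
  have hterm : ∀ (κ : Fin q → ℕ) (d : Fin q →₀ ℕ) (A : ℂ),
      (∏ i, (ω ^ d₀ i) ^ κ i)⁻¹ * (A * ∏ i, (ω ^ κ i) ^ d i) =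
        A * ∏ i, (ω ^ d i / ω ^ d₀ i) ^ κ i := by
    intro κ d A
    simp only [div_pow, Finset.prod_div_distrib, ← pow_mul, mul_comm (κ _)]
    ring
  have hsummable : ∀ κ : Fin q → ℕ, Summable fun d : Fin q →₀ ℕ =>
      (MvPowerSeries.coeff d F * ∏ i, x i ^ d i) * ∏ i, (ω ^ d i / ω ^ d₀ i) ^ κ i := by
    intro κ
    refine hsum.of_norm_bounded fun d => le_of_eq ?_
    simp [norm_prod, hω.norm'_eq_one hN]
  simp only [evalMv_mul_eq_tsum, ← tsum_mul_left, hterm]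
  rw [← Summable.tsum_finsetSum fun κ _ => hsummable κ, ← tsum_mul_left]
  refine tsum_congr fun d => ?_
  rw [← Finset.mul_sum, hω.sum_piFinset_prod_pow_div_pow_pow hN]
  split_ifs
  · field_simp
  · simp

theorem norm_coeff_mul_prod_pow_le_of_forall_norm_evalMv_le {q : ℕ}
    (F : MvPowerSeries (Fin q) ℂ) (x : Fin q → ℝ) (hx : ∀ i, 0 ≤ x i)
    (hsum : Summable fun d : Fin q →₀ ℕ => ‖MvPowerSeries.coeff d F‖ * ∏ i, x i ^ d i)
    {μ : ℝ} (hμ : ∀ y : Fin q → ℂ, (∀ i, ‖y i‖ ≤ x i) → ‖evalMv F y‖ ≤ μ)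
    (d₀ : Fin q →₀ ℕ) :
    ‖MvPowerSeries.coeff d₀ F‖ * ∏ i, x i ^ d₀ i ≤ μ := by
  set g : (Fin q →₀ ℕ) → ℝ := fun d => ‖MvPowerSeries.coeff d F‖ * ∏ i, x i ^ d i
  have hag : ∀ d, ‖MvPowerSeries.coeff d F * ∏ i, (x i : ℂ) ^ d i‖ = g d := fun d => by
    simp [g, norm_prod, Complex.norm_real, Real.norm_of_nonneg (hx _)]
  have hg0 : ∀ d, 0 ≤ g d := fun d => hag d ▸ norm_nonneg _
  refine le_of_forall_pos_le_add fun ε hε => ?_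
  obtain ⟨T, hT⟩ := ((tendsto_tsum_compl_atTop_zero g).eventually_lt_const hε).exists
  -- Averaging over `N`-th roots of unity keeps the monomials congruent to `d₀` mod `N`; as `N`
  -- exceeds every exponent in `d₀` and in `T`, all of them but `d₀` lie outside `T`.
  set N := (insert d₀ T).sup (fun d => ∑ i, d i) + 1
  have hN : N ≠ 0 := Nat.succ_ne_zero _
  have hlt : ∀ d ∈ insert d₀ T, ∀ i, d i < N := fun d hd i =>
    Nat.lt_succ_of_le ((Finset.single_le_sum (fun _ _ => Nat.zero_le _)
      (Finset.mem_univ i)).trans (Finset.le_sup (f := fun d => ∑ i, d i) hd))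
  have hω := Complex.isPrimitiveRoot_exp N hN
  set ω := Complex.exp (2 * Real.pi * Complex.I / N)
  set c : (Fin q →₀ ℕ) → ℂ := fun d => if ∀ i, d i ≡ d₀ i [MOD N] then
    MvPowerSeries.coeff d F * ∏ i, (x i : ℂ) ^ d i else 0
  have hcg : ∀ d, ‖c d‖ ≤ g d := fun d => by
    unfold c
    split_ifs
    · exact (hag d).le
    · exact norm_zero (E := ℂ) ▸ hg0 d
  have hc : Summable c := Summable.of_norm_bounded hsum hcg
  have havg : ‖∑' d, c d‖ ≤ μ := by
    rw [← hω.average_evalMv_eq_tsum hN F _ (by simpa only [hag] using hsum) d₀, norm_mul]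
    have hterm : ∀ κ : Fin q → ℕ,
        ‖(∏ i, (ω ^ d₀ i) ^ κ i)⁻¹ * evalMv F (fun i => ω ^ κ i * x i)‖ ≤ μ := fun κ => by
      simpa [norm_prod, hω.norm'_eq_one hN] using
        hμ _ fun i => by simp [hω.norm'_eq_one hN, abs_of_nonneg (hx i)]
    calc ‖((N : ℂ) ^ q)⁻¹‖ * ‖∑ κ ∈ Fintype.piFinset fun _ : Fin q => Finset.range N,
          (∏ i, (ω ^ d₀ i) ^ κ i)⁻¹ * evalMv F (fun i => ω ^ κ i * x i)‖
        ≤ ((N : ℝ) ^ q)⁻¹ * ∑ _κ ∈ Fintype.piFinset fun _ : Fin q => Finset.range N, μ := by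
          simp only [norm_inv, norm_pow, Complex.norm_natCast]
          gcongr
          exact (norm_sum_le _ _).trans (Finset.sum_le_sum fun κ _ => hterm κ)
      _ = μ := by
          rw [Finset.sum_const, Fintype.card_piFinset]
          simp [hN]
  have htail : ‖∑' d, if d = d₀ then 0 else c d‖ ≤ ∑' d : {d // d ∉ T}, g d := by
    refine tsum_of_norm_bounded
      ((hasSum_subtype_iff_indicator (s := {d | d ∉ T})).mp (hsum.subtype _).hasSum)
      fun d => ?_
    by_cases hd₀ : d = d₀
    · rw [if_pos hd₀, norm_zero]
      exact Set.indicator_nonneg (fun d _ => hg0 d) d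
    rw [if_neg hd₀]
    by_cases hdT : d ∈ T
    · have hcong : ¬ ∀ i, d i ≡ d₀ i [MOD N] := fun h => hd₀ <| Finsupp.ext fun i =>
        (h i).eq_of_lt_of_lt (hlt d (Finset.mem_insert_of_mem hdT) i)
          (hlt d₀ (Finset.mem_insert_self _ _) i)
      rw [show c d = 0 from if_neg hcong, norm_zero]
      exact Set.indicator_nonneg (fun d _ => hg0 d) d
    · rw [Set.indicator_of_mem hdT]
      exact hcg d
  calc g d₀ = ‖c d₀‖ := by simp only [c, if_pos fun i => Nat.ModEq.refl (d₀ i), hag]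
    _ = ‖∑' d, c d - ∑' d, if d = d₀ then 0 else c d‖ := by
      rw [hc.tsum_eq_add_tsum_ite d₀, add_sub_cancel_right]
    _ ≤ μ + ε := (norm_sub_le _ _).trans (add_le_add havg (htail.trans hT.le))

namespace PowerSeries

section TruncNorm

variable {R : Type*} [NormedCommRing R] {J : ℕ} {t : ℝ}

noncomputable def truncNorm (J : ℕ) (t : ℝ) (f : PowerSeries R) : ℝ :=
  ∑ j ∈ Finset.range J, ‖coeff j f‖ * t ^ j

theorem truncNorm_nonneg (ht : 0 ≤ t) (f : PowerSeries R) : 0 ≤ truncNorm J t f :=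
  Finset.sum_nonneg fun _ _ => by positivity

theorem truncNorm_mono {f g : PowerSeries R} (ht : 0 ≤ t)
    (h : ∀ j < J, ‖coeff j f‖ ≤ ‖coeff j g‖) : truncNorm J t f ≤ truncNorm J t g :=
  Finset.sum_le_sum fun j hj => by gcongr; exact h j (Finset.mem_range.1 hj)

theorem truncNorm_mul_le (ht : 0 ≤ t) (f g : PowerSeries R) :
    truncNorm J t (f * g) ≤ truncNorm J t f * truncNorm J t g := by
  set h : ℕ → ℕ → ℝ := fun a b => ‖coeff a f‖ * t ^ a * (‖coeff b g‖ * t ^ b)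
  calc truncNorm J t (f * g)
      ≤ ∑ j ∈ Finset.range J, ∑ p ∈ Finset.HasAntidiagonal.antidiagonal j, h p.1 p.2 := by
        refine Finset.sum_le_sum fun j _ => ?_
        rw [coeff_mul]
        refine (mul_le_mul_of_nonneg_right (norm_sum_le _ _) (by positivity)).trans ?_
        rw [Finset.sum_mul]
        refine Finset.sum_le_sum fun p hp => ?_
        rw [← Finset.HasAntidiagonal.mem_antidiagonal.1 hp, pow_add]
        calc ‖coeff p.1 f * coeff p.2 g‖ * (t ^ p.1 * t ^ p.2)
            ≤ ‖coeff p.1 f‖ * ‖coeff p.2 g‖ * (t ^ p.1 * t ^ p.2) := by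
              gcongr; exact norm_mul_le _ _
          _ = h p.1 p.2 := by ring
    _ = ∑ a ∈ Finset.range J, ∑ b ∈ Finset.range (J - a), h a b := by
        simp only [Finset.Nat.sum_antidiagonal_eq_sum_range_succ h, Finset.sum_range_diag_flip]
    _ ≤ ∑ a ∈ Finset.range J, ∑ b ∈ Finset.range J, h a b := by
        gcongr
        exact Nat.sub_le _ _
    _ = truncNorm J t f * truncNorm J t g := (Finset.sum_mul_sum _ _ _ _).symm

theorem truncNorm_succ_le {f g : PowerSeries R} {σ : ℝ} (hf : coeff 0 f = 0)
    (h : ∀ j, σ * ‖coeff (j + 1) f‖ ≤ ‖coeff j g‖) (ht : 0 ≤ t) :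
    σ * truncNorm (J + 1) t f ≤ t * truncNorm J t g := by
  rw [truncNorm, truncNorm, Finset.sum_range_succ', hf, norm_zero, zero_mul, add_zero,
    Finset.mul_sum, Finset.mul_sum]
  refine Finset.sum_le_sum fun j _ => ?_
  calc σ * (‖coeff (j + 1) f‖ * t ^ (j + 1)) = σ * ‖coeff (j + 1) f‖ * (t * t ^ j) := by ring
    _ ≤ ‖coeff j g‖ * (t * t ^ j) := by gcongr; exact h j
    _ = t * (‖coeff j g‖ * t ^ j) := by ring

variable [NormOneClass R]

theorem truncNorm_one_le : truncNorm J t (1 : PowerSeries R) ≤ 1 := by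
  rcases J with _ | J
  · simp [truncNorm]
  · simp [truncNorm, Finset.sum_range_succ', coeff_one]

theorem truncNorm_X_le (ht : 0 ≤ t) : truncNorm J t (X : PowerSeries R) ≤ t := by
  unfold truncNorm
  simp only [coeff_X, apply_ite, norm_one, norm_zero, ite_mul, one_mul, zero_mul]
  rw [Finset.sum_ite_eq']
  split_ifs <;> simp [ht]

theorem truncNorm_pow_le (ht : 0 ≤ t) (f : PowerSeries R) (m : ℕ) :
    truncNorm J t (f ^ m) ≤ truncNorm J t f ^ m := by
  induction m with
  | zero => simpa using truncNorm_one_le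
  | succ m ih =>
    rw [pow_succ, pow_succ]
    exact (truncNorm_mul_le ht _ _).trans
      (mul_le_mul_of_nonneg_right ih (truncNorm_nonneg ht f))

theorem truncNorm_prod_pow_le {ι : Type*} (ht : 0 ≤ t) (s : Finset ι)
    (u : ι → PowerSeries R) (d : ι → ℕ) :
    truncNorm J t (∏ i ∈ s, u i ^ d i) ≤ ∏ i ∈ s, truncNorm J t (u i) ^ d i := by
  calc truncNorm J t (∏ i ∈ s, u i ^ d i) ≤ ∏ i ∈ s, truncNorm J t (u i ^ d i) :=
        Finset.le_prod_of_submultiplicative_of_nonneg (M := PowerSeries R) (truncNorm J t)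
          (truncNorm_nonneg ht) truncNorm_one_le (truncNorm_mul_le ht) s _
    _ ≤ ∏ i ∈ s, truncNorm J t (u i) ^ d i :=
        Finset.prod_le_prod (fun _ _ => truncNorm_nonneg ht _)
          fun i _ => truncNorm_pow_le ht (u i) (d i)

end TruncNorm

end PowerSeries

noncomputable def multiIndexBox (q J : ℕ) : Finset (Fin q →₀ ℕ) :=
  (Fintype.piFinset fun _ : Fin q => Finset.range J).map
    Finsupp.equivFunOnFinite.symm.toEmbedding

theorem mem_multiIndexBox {q J : ℕ} {d : Fin q →₀ ℕ} :
    d ∈ multiIndexBox q J ↔ ∀ i, d i < J := by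
  simp [multiIndexBox, Finset.mem_map_equiv]

theorem sum_multiIndexBox_prod_pow {R : Type*} [CommSemiring R] (q J : ℕ) (w : Fin q → R) :
    ∑ d ∈ multiIndexBox q J, ∏ i, w i ^ d i = ∏ i, ∑ v ∈ Finset.range J, w i ^ v := by
  rw [multiIndexBox, Finset.sum_map, Finset.prod_univ_sum]
  rfl

theorem sum_multiIndexBox_norm_coeff_mul_prod_pow_le {R : Type*} [NormedRing R] {q : ℕ}
    (F : MvPowerSeries (Fin q) R) {x w : Fin q → ℝ} {μ : ℝ} (hx : ∀ i, 0 < x i)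
    (hw : ∀ i, 0 ≤ w i) (hwx : ∀ i, w i < x i)
    (hF : ∀ d, ‖MvPowerSeries.coeff d F‖ * ∏ i, x i ^ d i ≤ μ) (J : ℕ) :
    ∑ d ∈ multiIndexBox q J, ‖MvPowerSeries.coeff d F‖ * ∏ i, w i ^ d i ≤
      μ * ∏ i, (1 - w i / x i)⁻¹ := by
  have hμ : 0 ≤ μ := (mul_nonneg (norm_nonneg _)
    (Finset.prod_nonneg fun i _ => pow_nonneg (hx i).le _)).trans (hF 0)
  have hterm : ∀ d,
      ‖MvPowerSeries.coeff d F‖ * ∏ i, w i ^ d i ≤ μ * ∏ i, (w i / x i) ^ d i := by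
    intro d
    calc ‖MvPowerSeries.coeff d F‖ * ∏ i, w i ^ d i
        = ‖MvPowerSeries.coeff d F‖ * (∏ i, x i ^ d i) * ∏ i, (w i / x i) ^ d i := by
          rw [mul_assoc, ← Finset.prod_mul_distrib]
          congr 1
          refine Finset.prod_congr rfl fun i _ => ?_
          rw [← mul_pow, mul_div_cancel₀ _ (hx i).ne']
      _ ≤ μ * ∏ i, (w i / x i) ^ d i := by
          gcongr
          · exact Finset.prod_nonneg fun i _ => pow_nonneg (div_nonneg (hw i) (hx i).le) _
          · exact hF d
  calc ∑ d ∈ multiIndexBox q J, ‖MvPowerSeries.coeff d F‖ * ∏ i, w i ^ d i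
      ≤ μ * ∏ i, ∑ v ∈ Finset.range J, (w i / x i) ^ v := by
        rw [← sum_multiIndexBox_prod_pow, Finset.mul_sum]
        exact Finset.sum_le_sum fun d _ => hterm d
    _ ≤ μ * ∏ i, (1 - w i / x i)⁻¹ := by
        have hr0 : ∀ i, 0 ≤ w i / x i := fun i => div_nonneg (hw i) (hx i).le
        have hr1 : ∀ i, w i / x i < 1 := fun i => (div_lt_one (hx i)).2 (hwx i)
        gcongr with i
        · exact fun i _ => Finset.sum_nonneg fun v _ => pow_nonneg (hr0 i) v
        · rw [← tsum_geometric_of_lt_one (hr0 i) (hr1 i)]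
          exact (summable_geometric_of_lt_one (hr0 i) (hr1 i)).sum_le_tsum _
            fun v _ => pow_nonneg (hr0 i) v

theorem PowerSeries.coeff_prod_pow_eq_zero {R : Type*} [CommSemiring R] {q : ℕ}
    {u : Fin q → PowerSeries R} (hu : ∀ i, constantCoeff (u i) = 0) {d : Fin q → ℕ}
    {j : ℕ} {i : Fin q} (hj : j < d i) : coeff j (∏ i, u i ^ d i) = 0 := by
  have hdvd : X ^ d i ∣ ∏ i, u i ^ d i :=
    (pow_dvd_pow_of_dvd (X_dvd_iff.2 (hu i)) _).trans
      (Finset.dvd_prod_of_mem _ (Finset.mem_univ i))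
  exact X_pow_dvd_iff.1 hdvd j hj

theorem coeff_substSeries_eq_sum {q : ℕ} (F : MvPowerSeries (Fin q) ℂ)
    {u : Fin q → PowerSeries ℂ} (hu : ∀ i, constantCoeff (u i) = 0) {j J : ℕ} (hj : j < J) :
    coeff j (substSeries F u) =
      ∑ d ∈ multiIndexBox q J, MvPowerSeries.coeff d F * coeff j (∏ i, u i ^ d i) := by
  rw [substSeries, coeff_mk]
  refine tsum_eq_sum fun d hd => ?_
  obtain ⟨i, hi⟩ : ∃ i, J ≤ d i := by simpa [mem_multiIndexBox] using hd
  rw [coeff_prod_pow_eq_zero hu (hj.trans_le hi), mul_zero]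

theorem truncNorm_substSeries_le {q : ℕ} (F : MvPowerSeries (Fin q) ℂ)
    {u : Fin q → PowerSeries ℂ} (hu : ∀ i, constantCoeff (u i) = 0) {J : ℕ} {t : ℝ}
    (ht : 0 ≤ t) {w : Fin q → ℝ} (hw : ∀ i, truncNorm J t (u i) ≤ w i) :
    truncNorm J t (substSeries F u) ≤
      ∑ d ∈ multiIndexBox q J, ‖MvPowerSeries.coeff d F‖ * ∏ i, w i ^ d i := by
  calc truncNorm J t (substSeries F u)
      ≤ ∑ j ∈ Finset.range J, ∑ d ∈ multiIndexBox q J,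
          ‖MvPowerSeries.coeff d F‖ * (‖coeff j (∏ i, u i ^ d i)‖ * t ^ j) := by
        refine Finset.sum_le_sum fun j hj => ?_
        rw [coeff_substSeries_eq_sum F hu (Finset.mem_range.1 hj)]
        refine (mul_le_mul_of_nonneg_right (norm_sum_le _ _) (by positivity)).trans ?_
        rw [Finset.sum_mul]
        refine Finset.sum_le_sum fun d _ => ?_
        rw [norm_mul, mul_assoc]
    _ = ∑ d ∈ multiIndexBox q J,
          ‖MvPowerSeries.coeff d F‖ * truncNorm J t (∏ i, u i ^ d i) := by
        rw [Finset.sum_comm]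
        simp only [truncNorm, Finset.mul_sum]
    _ ≤ ∑ d ∈ multiIndexBox q J, ‖MvPowerSeries.coeff d F‖ * ∏ i, w i ^ d i := by
        gcongr with d
        refine (truncNorm_prod_pow_le ht _ _ _).trans ?_
        exact Finset.prod_le_prod (fun i _ => pow_nonneg (truncNorm_nonneg ht _) _)
          fun i _ => pow_le_pow_left₀ (truncNorm_nonneg ht _) (hw i) _

theorem coeff_iterate_eulerD (m : ℕ) (u : PowerSeries ℂ) (j : ℕ) :
    coeff j (eulerD^[m] u) = (j : ℂ) ^ m * coeff j u := by
  induction m with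
  | zero => simp
  | succ m ih =>
    rw [Function.iterate_succ_apply', eulerD, coeff_mk, ih]
    ring

theorem coeff_iterate_dshift (k i : ℕ) (u : PowerSeries ℂ) (j : ℕ) :
    coeff j ((dshift k)^[i] u) = ((j + k : ℕ) : ℂ) ^ i * coeff j u := by
  induction i with
  | zero => simp
  | succ i ih =>
    rw [Function.iterate_succ_apply', dshift, map_add, eulerD, coeff_mk, map_smul, ih]
    push_cast
    ring

theorem coeff_LpolyOp (L : Polynomial ℂ) (k : ℕ) (u : PowerSeries ℂ) (j : ℕ) :
    coeff j (LpolyOp L k u) = L.eval ((j + k : ℕ) : ℂ) * coeff j u := by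
  simp only [LpolyOp, map_sum, map_smul, coeff_iterate_dshift, smul_eq_mul, ← mul_assoc,
    ← Finset.sum_mul, Polynomial.eval_eq_sum_range]

theorem constantCoeff_phiArgs {n : ℕ} {ψ : PowerSeries ℂ} (hψ : constantCoeff ψ = 0)
    (i : Fin (n + 2)) : constantCoeff (phiArgs n ψ i) = 0 := by
  unfold phiArgs
  split_ifs
  · exact constantCoeff_X
  · rw [← coeff_zero_eq_constantCoeff_apply, coeff_iterate_eulerD,
      coeff_zero_eq_constantCoeff_apply, hψ, mul_zero]

theorem truncNorm_iterate_eulerD_le {ψ : PowerSeries ℂ} (hψ : constantCoeff ψ = 0) {m n : ℕ}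
    (hmn : m ≤ n) {J : ℕ} {t : ℝ} (ht : 0 ≤ t) :
    truncNorm J t (eulerD^[m] ψ) ≤ truncNorm J t (eulerD^[n] ψ) := by
  refine truncNorm_mono ht fun j _ => ?_
  rcases j with _ | j
  · rw [coeff_iterate_eulerD, coeff_iterate_eulerD, coeff_zero_eq_constantCoeff_apply, hψ]
    simp
  · simp only [coeff_iterate_eulerD, norm_mul, norm_pow, Complex.norm_natCast]
    gcongr
    norm_cast
    omega

theorem truncNorm_phiArgs_le {n : ℕ} {ψ : PowerSeries ℂ} (hψ : constantCoeff ψ = 0)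
    {J : ℕ} {t : ℝ} (ht : 0 ≤ t) (i : Fin (n + 2)) :
    truncNorm J t (phiArgs n ψ i) ≤
      (Fin.cons t fun _ => truncNorm J t (eulerD^[n] ψ) : Fin (n + 2) → ℝ) i := by
  cases i using Fin.cases with
  | zero => simpa [phiArgs] using truncNorm_X_le ht
  | succ i =>
    simpa [phiArgs] using truncNorm_iterate_eulerD_le hψ (Nat.lt_succ_iff.1 i.isLt) ht

theorem truncNorm_succ_iterate_eulerD_le {n k : ℕ} {L : Polynomial ℂ} {σ : ℝ}
    (hσ : ∀ j : ℕ, 1 ≤ j → σ * (j : ℝ) ^ n ≤ ‖L.eval ((j + k : ℕ) : ℂ)‖)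
    {ψ F : PowerSeries ℂ} (hψ0 : constantCoeff ψ = 0) (hψ : LpolyOp L k ψ = X * F)
    {t : ℝ} (ht : 0 ≤ t) (J : ℕ) :
    σ * truncNorm (J + 1) t (eulerD^[n] ψ) ≤ t * truncNorm J t F := by
  refine truncNorm_succ_le ?_ (fun j => ?_) ht
  · rw [coeff_iterate_eulerD, coeff_zero_eq_constantCoeff_apply, hψ0, mul_zero]
  · have hcoeff := congrArg (coeff (j + 1)) hψ
    rw [coeff_LpolyOp, coeff_succ_X_mul] at hcoeff
    rw [← hcoeff, coeff_iterate_eulerD, norm_mul, norm_mul, norm_pow, Complex.norm_natCast,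
      ← mul_assoc]
    exact mul_le_mul_of_nonneg_right (hσ (j + 1) le_add_self) (norm_nonneg _)

theorem truncNorm_iterate_eulerD_le_of_fixedPoint {n k : ℕ} {L : Polynomial ℂ} {σ : ℝ}
    (hσ0 : 0 < σ) (hσ : ∀ j : ℕ, 1 ≤ j → σ * (j : ℝ) ^ n ≤ ‖L.eval ((j + k : ℕ) : ℂ)‖)
    {M : MvPowerSeries (Fin (n + 2)) ℂ} {r ρ μ : ℝ} (hr : 0 < r) (hρ : 0 < ρ)
    (hM : ∀ d, ‖MvPowerSeries.coeff d M‖ *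
      ∏ i, (Fin.cons r fun _ => ρ : Fin (n + 2) → ℝ) i ^ d i ≤ μ)
    {ψ : PowerSeries ℂ} (hψ0 : constantCoeff ψ = 0)
    (hψ : LpolyOp L k ψ = X * substSeries M (phiArgs n ψ))
    {t s : ℝ} (ht : 0 ≤ t) (htr : t < r) (hs : 0 ≤ s) (hsρ : s < ρ)
    (hfix : t * (μ * ((1 - t / r)⁻¹ * (1 - s / ρ)⁻¹ ^ (n + 1))) ≤ σ * s) (J : ℕ) :
    truncNorm J t (eulerD^[n] ψ) ≤ s := by
  induction J with
  | zero => simpa [truncNorm] using hs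
  | succ J ih =>
    set w : Fin (n + 2) → ℝ := Fin.cons t fun _ => s
    have hw : ∀ i, truncNorm J t (phiArgs n ψ i) ≤ w i := fun i =>
      (truncNorm_phiArgs_le hψ0 ht i).trans <| by cases i using Fin.cases <;> simp [w, ih]
    have hsubst := truncNorm_substSeries_le M (constantCoeff_phiArgs hψ0) ht hw
    have hgeom := sum_multiIndexBox_norm_coeff_mul_prod_pow_le M
      (x := Fin.cons r fun _ => ρ) (w := w)
      (fun i => by cases i using Fin.cases <;> simp [hr, hρ])
      (fun i => by cases i using Fin.cases <;> simp [w, ht, hs])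
      (fun i => by cases i using Fin.cases <;> simp [w, htr, hsρ]) hM J
    have hprod : ∏ i, (1 - w i / (Fin.cons r fun _ => ρ : Fin (n + 2) → ℝ) i)⁻¹ =
        (1 - t / r)⁻¹ * (1 - s / ρ)⁻¹ ^ (n + 1) := by
      rw [Fin.prod_univ_succ]
      simp [w]
    rw [hprod] at hgeom
    refine le_of_mul_le_mul_left ?_ hσ0
    calc σ * truncNorm (J + 1) t (eulerD^[n] ψ)
        ≤ t * truncNorm J t (substSeries M (phiArgs n ψ)) :=
          truncNorm_succ_iterate_eulerD_le hσ hψ0 hψ ht J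
      _ ≤ t * (μ * ((1 - t / r)⁻¹ * (1 - s / ρ)⁻¹ ^ (n + 1))) := by
          gcongr
          exact hsubst.trans hgeom
      _ ≤ σ * s := hfix

theorem exists_mul_one_sub_div_pow_eq {ρ c : ℝ} (hρ : 0 < ρ) (n : ℕ) (hc0 : 0 ≤ c)
    (hc : c ≤ ρ * ((n + 1 : ℝ) ^ (n + 1) / (n + 2 : ℝ) ^ (n + 2))) :
    ∃ s, 0 ≤ s ∧ s < ρ ∧ s * (1 - s / ρ) ^ (n + 1) = c := by
  set f : ℝ → ℝ := fun s => s * (1 - s / ρ) ^ (n + 1)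
  have hmax : f (ρ / (n + 2)) = ρ * ((n + 1 : ℝ) ^ (n + 1) / (n + 2 : ℝ) ^ (n + 2)) := by
    have h1 : 1 - ρ / (n + 2) / ρ = (n + 1 : ℝ) / (n + 2) := by field_simp; ring
    simp only [f, h1, div_pow, pow_succ _ (n + 1)]
    field_simp
  obtain ⟨s, ⟨hs0, hs⟩, hfs⟩ := intermediate_value_Icc (by positivity : (0 : ℝ) ≤ ρ / (n + 2))
    (by fun_prop : Continuous f).continuousOn ⟨by simpa [f] using hc0, hmax ▸ hc⟩
  refine ⟨s, hs0, hs.trans_lt ?_, hfs⟩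
  exact div_lt_self hρ (by linarith [(n.cast_nonneg : (0 : ℝ) ≤ n)])

theorem exists_fixedPoint_of_lt_radius {n : ℕ} {σ r ρ μ t : ℝ} (hσ : 0 < σ) (hr : 0 < r)
    (hρ : 0 < ρ) (hμ : 0 ≤ μ) (ht : 0 < t)
    (htR : t < r * ρ / (ρ + μ * r / (σ * ((n + 1 : ℝ) ^ (n + 1) / (n + 2 : ℝ) ^ (n + 2))))) :
    t < r ∧ ∃ s, 0 ≤ s ∧ s < ρ ∧
      t * (μ * ((1 - t / r)⁻¹ * (1 - s / ρ)⁻¹ ^ (n + 1))) ≤ σ * s := by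
  set N : ℝ := (n + 1 : ℝ) ^ (n + 1) / (n + 2 : ℝ) ^ (n + 2)
  have hN : 0 < N := by positivity
  have hD : 0 < ρ + μ * r / (σ * N) := by positivity
  rw [lt_div_iff₀ hD] at htR
  have htr : t < r := by
    have : t * ρ ≤ t * (ρ + μ * r / (σ * N)) :=
      mul_le_mul_of_nonneg_left (le_add_of_nonneg_right (by positivity)) ht.le
    nlinarith
  have hrt : 0 < 1 - t / r := by rw [sub_pos, div_lt_one hr]; exact htr
  have hc : μ * t / (σ * (1 - t / r)) ≤ ρ * N := by
    rw [div_le_iff₀ (by positivity)]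
    have h1 : t * (μ * r / (σ * N)) ≤ ρ * (r - t) := by nlinarith
    rw [mul_div_assoc', div_le_iff₀ (by positivity)] at h1
    have h2 : 1 - t / r = (r - t) / r := by field_simp
    rw [h2]
    field_simp
    nlinarith
  obtain ⟨s, hs0, hsρ, hs⟩ := exists_mul_one_sub_div_pow_eq hρ n (by positivity) hc
  refine ⟨htr, s, hs0, hsρ, le_of_eq ?_⟩
  have hsρ' : 0 < 1 - s / ρ := by rw [sub_pos, div_lt_one hρ]; exact hsρ
  rw [eq_div_iff (by positivity)] at hs
  rw [show t * (μ * ((1 - t / r)⁻¹ * (1 - s / ρ)⁻¹ ^ (n + 1))) =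
    μ * t * ((1 - t / r)⁻¹ * (1 - s / ρ)⁻¹ ^ (n + 1)) by ring, ← hs]
  generalize 1 - s / ρ = A at hsρ' ⊢
  generalize 1 - t / r = B at hrt ⊢
  rw [inv_pow]
  field_simp

theorem norm_coeff_mul_prod_pow_le_of_isGreatest {n : ℕ} {r ρ μ : ℝ} (hr : 0 < r) (hρ : 0 < ρ)
    {M : MvPowerSeries (Fin (n + 2)) ℂ}
    (hM : ∃ r' ρ' : ℝ, r < r' ∧ ρ < ρ' ∧
      Summable fun d : Fin (n + 2) →₀ ℕ =>
        ‖MvPowerSeries.coeff d M‖ * r' ^ (d 0) * ρ' ^ (∑ i : Fin (n + 1), d i.succ))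
    (hμ : IsGreatest {t : ℝ | ∃ x : Fin (n + 2) → ℂ, ‖x 0‖ ≤ r ∧
      (∀ i : Fin (n + 1), ‖x i.succ‖ ≤ ρ) ∧ t = ‖evalMv M x‖} μ) (d : Fin (n + 2) →₀ ℕ) :
    ‖MvPowerSeries.coeff d M‖ *
      ∏ i, (Fin.cons r fun _ => ρ : Fin (n + 2) → ℝ) i ^ d i ≤ μ := by
  have hprod : ∀ (a b : ℝ) (d : Fin (n + 2) →₀ ℕ),
      ∏ i, (Fin.cons a fun _ => b : Fin (n + 2) → ℝ) i ^ d i =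
        a ^ d 0 * b ^ ∑ i : Fin (n + 1), d i.succ := fun a b d => by
    rw [Fin.prod_univ_succ]
    simp [Finset.prod_pow_eq_pow_sum]
  obtain ⟨r', ρ', hr', hρ', hsum⟩ := hM
  have hr'0 : 0 < r' := hr.trans hr'
  refine norm_coeff_mul_prod_pow_le_of_forall_norm_evalMv_le M _
    (fun i => by cases i using Fin.cases <;> simp [hr.le, hρ.le]) ?_ ?_ d
  · refine hsum.of_nonneg_of_le (fun d => by rw [hprod]; positivity) fun d => ?_
    rw [hprod, ← mul_assoc]
    gcongr
  · intro y hy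
    exact hμ.2 ⟨y, by simpa using hy 0, fun i => by simpa using hy i.succ, rfl⟩

theorem radius_estimate_general (n : ℕ)
    (L : Polynomial ℂ) (hdeg : L.degree = (n : ℕ)) (k : ℕ)
    (hLk : ∀ j : ℕ, 1 ≤ j → L.eval ((j + k : ℕ) : ℂ) ≠ 0)
    (σ : ℝ)
    (hσ : σ = ⨅ j : ℕ, ‖L.eval ((j + 1 + k : ℕ) : ℂ)‖ / ((j + 1 : ℕ) : ℝ) ^ n)
    (r ρ μ : ℝ) (hr : 0 < r) (hρ : 0 < ρ)
    (M : MvPowerSeries (Fin (n + 2)) ℂ)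
    (hM : ∃ r' ρ' : ℝ, r < r' ∧ ρ < ρ' ∧
      Summable fun d : Fin (n + 2) →₀ ℕ =>
        ‖MvPowerSeries.coeff d M‖ * r' ^ (d 0) * ρ' ^ (∑ i : Fin (n + 1), d i.succ))
    (hμ : IsGreatest {t : ℝ | ∃ x : Fin (n + 2) → ℂ, ‖x 0‖ ≤ r ∧
      (∀ i : Fin (n + 1), ‖x i.succ‖ ≤ ρ) ∧ t = ‖evalMv M x‖} μ)
    (ψhat : PowerSeries ℂ) (hψhat0 : PowerSeries.constantCoeff ψhat = 0)
    (hψhat : LpolyOp L k ψhat = PowerSeries.X * substSeries M (phiArgs n ψhat)) :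
    ∀ t : ℝ, 0 < t →
      t < r * ρ / (ρ + μ * r / (σ * ((n + 1 : ℝ) ^ (n + 1) / (n + 2 : ℝ) ^ (n + 2)))) →
      Summable fun j : ℕ => ‖PowerSeries.coeff j ψhat‖ * t ^ j := by
  intro t ht htR
  have hL0 : L ≠ 0 := by rintro rfl; simp at hdeg
  have hσ0 : 0 < σ := hσ ▸ Polynomial.iInf_norm_eval_div_pow_pos
    (Polynomial.natDegree_eq_of_degree_eq_some hdeg) hL0 hLk
  have hμ0 : 0 ≤ μ := by
    obtain ⟨x, -, -, rfl⟩ := hμ.1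
    exact norm_nonneg _
  obtain ⟨htr, s, hs0, hsρ, hfix⟩ := exists_fixedPoint_of_lt_radius hσ0 hr hρ hμ0 ht htR
  have hS : ∀ J, truncNorm J t (eulerD^[n] ψhat) ≤ s :=
    truncNorm_iterate_eulerD_le_of_fixedPoint hσ0
      (Polynomial.mul_pow_le_norm_eval_of_eq_iInf hσ) hr hρ
      (norm_coeff_mul_prod_pow_le_of_isGreatest hr hρ hM hμ) hψhat0 hψhat ht.le htr hs0 hsρ
      hfix
  refine summable_of_sum_range_le (c := s) (fun j => by positivity) fun J => ?_
  exact (truncNorm_iterate_eulerD_le hψhat0 (Nat.zero_le n) ht.le).trans (hS J)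

/-- **Proposition 1**: if `M` is holomorphic in a neighbourhood of the closed polydisk
`Δ̄ = {|z| ≤ r, |y₀| ≤ ρ, …, |y_n| ≤ ρ}` and `μ = max_Δ̄ |M|`, then the formal solution
`ψ̂` of `L̄(δ+k)ψ̂ = z·M(z, ψ̂, δψ̂, …, δⁿψ̂)` converges in the disk of radius
`R = rρ/(ρ + μr/(σN))`, `N = (n+1)^{n+1}/(n+2)^{n+2}`. -/
theorem radius_estimate (n : ℕ) (hn : 1 ≤ n)
    (L : Polynomial ℂ) (hdeg : L.degree = (n : ℕ)) (k : ℕ)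
    (hLk : ∀ j : ℕ, 1 ≤ j → L.eval ((j + k : ℕ) : ℂ) ≠ 0)
    (σ : ℝ)
    (hσ : σ = ⨅ j : ℕ, ‖L.eval ((j + 1 + k : ℕ) : ℂ)‖ / ((j + 1 : ℕ) : ℝ) ^ n)
    (r ρ μ : ℝ) (hr : 0 < r) (hρ : 0 < ρ)
    (M : MvPowerSeries (Fin (n + 2)) ℂ)
    (hM : ∃ r' ρ' : ℝ, r < r' ∧ ρ < ρ' ∧
      Summable fun d : Fin (n + 2) →₀ ℕ =>
        ‖MvPowerSeries.coeff d M‖ * r' ^ (d 0) * ρ' ^ (∑ i : Fin (n + 1), d i.succ))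
    (hμ : IsGreatest {t : ℝ | ∃ x : Fin (n + 2) → ℂ, ‖x 0‖ ≤ r ∧
      (∀ i : Fin (n + 1), ‖x i.succ‖ ≤ ρ) ∧ t = ‖evalMv M x‖} μ)
    (ψhat : PowerSeries ℂ) (hψhat0 : PowerSeries.constantCoeff ψhat = 0)
    (hψhat : LpolyOp L k ψhat = PowerSeries.X * substSeries M (phiArgs n ψhat)) :
    ∀ t : ℝ, 0 < t →
      t < r * ρ / (ρ + μ * r / (σ * ((n + 1 : ℝ) ^ (n + 1) / (n + 2 : ℝ) ^ (n + 2)))) →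
      Summable fun j : ℕ => ‖PowerSeries.coeff j ψhat‖ * t ^ j :=
  radius_estimate_general n L hdeg k hLk σ hσ r ρ μ hr hρ M hM hμ ψhat hψhat0 hψhat
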